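/- arXiv:math/0412081 — 7 statements merged into one kernel-verified Lean document; each statement's English description precedes it below -/
import Mathlib

section
/- For every R > 1, the measure m_2 (Lebesgue measure restricted to A = {(x,y) : x > 1, 0 < y < 1/x}) of the euclidean ball B_e((R,1),1) is strictly less than 2√2/(R-1)^{3/2}. -/
/-!
The ball `eBall (R, 1) 1` is tangent to the `x`-axis, so it lies above the parabola
`(x - R)² < 2y`; on `A` it only meets `x > R - 1`, hence `y < h := 1/(R - 1)` there.
Covering the part of the parabola below height `h` by the rectangles of heights `h/2`
below and above `y = h/2` gives area `(1 + √2) h^{3/2} < 2√2 h^{3/2}`.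
-/

open MeasureTheory Real Set

noncomputable section

/-- Open euclidean ball in `ℝ × ℝ` with center `c` and radius `r`. -/
def eBall (c : ℝ × ℝ) (r : ℝ) : Set (ℝ × ℝ) :=
  {p | (p.1 - c.1) ^ 2 + (p.2 - c.2) ^ 2 < r ^ 2}

/-- Open hyperbolic ball (upper half-plane model) with center `w` and radius `s`,
characterized via `cosh (d_h p w) = 1 + |p - w|² / (2 p₂ w₂)`. -/
def hBall (w : ℝ × ℝ) (s : ℝ) : Set (ℝ × ℝ) :=
  {p | 0 < p.2 ∧ 1 + ((p.1 - w.1) ^ 2 + (p.2 - w.2) ^ 2) / (2 * p.2 * w.2) < Real.cosh s}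

/-- The restriction to the upper half plane of the standard Gaussian measure on `ℝ²`. -/
def m1 : Measure (ℝ × ℝ) :=
  (volume.restrict {p : ℝ × ℝ | 0 < p.2}).withDensity
    (fun p => ENNReal.ofReal ((2 * π)⁻¹ * Real.exp (-(p.1 ^ 2 + p.2 ^ 2) / 2)))

/-- The region `A = {(x,y) : x > 1, 0 < y < 1/x}`. -/
def regA : Set (ℝ × ℝ) := {p | 1 < p.1 ∧ 0 < p.2 ∧ p.2 < p.1⁻¹}

/-- Lebesgue measure restricted to `A`. -/
def m2 : Measure (ℝ × ℝ) := volume.restrict regA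

/-- The measure `μ = m₁ + m₂`. -/
def mu : Measure (ℝ × ℝ) := m1 + m2

/-- The centered maximal function of a measure `ν` with respect to `μ`,
using hyperbolic balls. -/
def Mmax (μ ν : Measure (ℝ × ℝ)) (w : ℝ × ℝ) : ENNReal :=
  ⨆ (s : ℝ) (_ : 0 < s), ν (hBall w s) / μ (hBall w s)

lemma measurableSet_eBall (c : ℝ × ℝ) (r : ℝ) : MeasurableSet (eBall c r) := by
  apply measurableSet_lt <;> fun_prop

lemma eBall_subset_parabola (c r : ℝ) :
    eBall (c, r) r ⊆ {p | (p.1 - c) ^ 2 < 2 * r * p.2} := by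
  intro p hp
  simp only [eBall, mem_ofPred_eq] at hp ⊢
  nlinarith [sq_nonneg p.2]

lemma eBall_inter_regA_subset {R : ℝ} (hR : 1 < R) :
    eBall (R, 1) 1 ∩ regA ⊆ {p | 0 < p.2 ∧ p.2 < (R - 1)⁻¹ ∧ (p.1 - R) ^ 2 < 2 * p.2} := by
  rintro p ⟨hball, -, hy, hyx⟩
  have hparab : (p.1 - R) ^ 2 < 2 * p.2 := by simpa using eBall_subset_parabola R 1 hball
  have hx : R - 1 < p.1 := by
    simp only [eBall, mem_ofPred_eq] at hball
    nlinarith [sq_nonneg (p.2 - 1)]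
  exact ⟨hy, hyx.trans (inv_strictAnti₀ (by linarith) hx), hparab⟩

lemma mem_Ioo_sub_sqrt_add_sqrt {x c a : ℝ} (h : (x - c) ^ 2 < a) :
    x ∈ Ioo (c - √a) (c + √a) := by
  have hlt : (x - c) ^ 2 < √a ^ 2 := by
    rwa [Real.sq_sqrt ((sq_nonneg _).trans h.le)]
  obtain ⟨hleft, hright⟩ := abs_lt_of_sq_lt_sq' hlt (Real.sqrt_nonneg a)
  exact ⟨by linarith, by linarith⟩

lemma volume_parabolic_strip_le (c : ℝ) {h : ℝ} (hh : 0 ≤ h) :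
    volume {p : ℝ × ℝ | 0 < p.2 ∧ p.2 < h ∧ (p.1 - c) ^ 2 < 2 * p.2} ≤
      ENNReal.ofReal ((1 + √2) * (h * √h)) := by
  have hcover : {p : ℝ × ℝ | 0 < p.2 ∧ p.2 < h ∧ (p.1 - c) ^ 2 < 2 * p.2} ⊆
      Ioo (c - √h) (c + √h) ×ˢ Ioo 0 (h / 2) ∪
        Ioo (c - √(2 * h)) (c + √(2 * h)) ×ˢ Ico (h / 2) h := by
    rintro p ⟨hy, hyh, hparab⟩
    rcases lt_or_ge p.2 (h / 2) with hlow | hhigh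
    · exact Or.inl ⟨mem_Ioo_sub_sqrt_add_sqrt (by linarith), hy, hlow⟩
    · exact Or.inr ⟨mem_Ioo_sub_sqrt_add_sqrt (by linarith), hhigh, hyh⟩
  have hsqrt : √(2 * h) = √2 * √h := Real.sqrt_mul zero_le_two h
  calc volume {p : ℝ × ℝ | 0 < p.2 ∧ p.2 < h ∧ (p.1 - c) ^ 2 < 2 * p.2}
      ≤ volume (Ioo (c - √h) (c + √h) ×ˢ Ioo 0 (h / 2)) +
          volume (Ioo (c - √(2 * h)) (c + √(2 * h)) ×ˢ Ico (h / 2) h) :=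
        (measure_mono hcover).trans (measure_union_le _ _)
    _ = ENNReal.ofReal (2 * √h) * ENNReal.ofReal (h / 2) +
          ENNReal.ofReal (2 * √(2 * h)) * ENNReal.ofReal (h / 2) := by
        simp only [Measure.volume_eq_prod, Measure.prod_prod, Real.volume_Ioo, Real.volume_Ico]
        ring_nf
    _ = ENNReal.ofReal ((1 + √2) * (h * √h)) := by
        rw [← ENNReal.ofReal_mul (by positivity), ← ENNReal.ofReal_mul (by positivity),
          ← ENNReal.ofReal_add (by positivity) (by positivity), hsqrt]
        ring_nf

theorem stmt4 (R : ℝ) (hR : 1 < R) :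
    m2 (eBall (R, 1) 1) <
      ENNReal.ofReal (2 * Real.sqrt 2 / (R - 1) ^ ((3 : ℝ) / 2)) := by
  set h := (R - 1)⁻¹ with hh
  have hpos : 0 < h := inv_pos.mpr (by linarith)
  have hbound : 2 * √2 / (R - 1) ^ ((3 : ℝ) / 2) = 2 * √2 * (h * √h) := by
    rw [hh, Real.sqrt_inv, show (3 : ℝ) / 2 = 1 + 1 / 2 by norm_num,
      Real.rpow_add (by linarith), Real.rpow_one, ← Real.sqrt_eq_rpow]
    field_simp
  calc m2 (eBall (R, 1) 1)
      = volume (eBall (R, 1) 1 ∩ regA) := Measure.restrict_apply (measurableSet_eBall _ _)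
    _ ≤ ENNReal.ofReal ((1 + √2) * (h * √h)) :=
        (measure_mono (eBall_inter_regA_subset hR)).trans (volume_parabolic_strip_le R hpos.le)
    _ < ENNReal.ofReal (2 * √2 / (R - 1) ^ ((3 : ℝ) / 2)) := by
        rw [hbound, ENNReal.ofReal_lt_ofReal_iff (by positivity)]
        gcongr
        linarith [Real.one_lt_sqrt_two]
end
end

section
/- Let b > 3 and 0 < r < b, and suppose r > b - 1. Then the Lebesgue measure of B_e((a,b),r) ∩ A, where A = {(x,y) : x > 1, 0 < y < 1/x}, is at most log(1 + 2r), which is at most 2s where s = (1/2) log(1 + 2r/(b-r)). -/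
open MeasureTheory Real Set

noncomputable section

lemma vol_region_aux (u v : ℝ) (hu : 0 < u) (huv : u ≤ v) :
    volume (regionBetween (fun _ => (0:ℝ)) (fun x => x⁻¹) (Ioo u v)) =
      ENNReal.ofReal (Real.log (v / u)) := by
  have hcont : ContinuousOn (fun x : ℝ => x⁻¹) (Icc u v) := by
    apply ContinuousOn.inv₀ continuousOn_id
    intro x hx; exact (lt_of_lt_of_le hu hx.1).ne'
  have hint : IntegrableOn (fun x : ℝ => x⁻¹) (Ioo u v) :=
    (hcont.integrableOn_Icc).mono_set Ioo_subset_Icc_self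
  have h0 : IntegrableOn (fun _ : ℝ => (0:ℝ)) (Ioo u v) :=
    (integrableOn_const_iff (C := (0:ℝ))).mpr (Or.inr measure_Ioo_lt_top)
  rw [Measure.volume_eq_prod, volume_regionBetween_eq_integral h0 hint measurableSet_Ioo
    (fun x hx => inv_nonneg.mpr (hu.trans hx.1).le)]
  simp only [Pi.sub_apply, sub_zero]
  congr 1
  rw [← integral_Ioc_eq_integral_Ioo, ← intervalIntegral.integral_of_le huv]
  exact integral_inv (notMem_uIcc_of_lt hu (lt_of_lt_of_le hu huv))

theorem stmt8 (a b r : ℝ) (hb : 3 < b) (hr0 : 0 < r) (hrb : r < b) (hr1 : b - 1 < r) :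
    volume (eBall (a, b) r ∩ regA) ≤ ENNReal.ofReal (Real.log (1 + 2 * r)) ∧
    Real.log (1 + 2 * r) ≤ 2 * ((1 / 2) * Real.log (1 + 2 * r / (b - r))) := by
  constructor
  · set u : ℝ := max 1 (a - r) with hu_def
    set v : ℝ := max u (a + r) with hv_def
    have hu1 : (1:ℝ) ≤ u := le_max_left _ _
    have hu0 : (0:ℝ) < u := lt_of_lt_of_le one_pos hu1
    have huv : u ≤ v := le_max_left _ _
    have hsub : eBall (a, b) r ∩ regA ⊆
        regionBetween (fun _ => (0:ℝ)) (fun x => x⁻¹) (Ioo u v) := by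
      rintro p ⟨hpB, hpA⟩
      have hB : (p.1 - a) ^ 2 + (p.2 - b) ^ 2 < r ^ 2 := hpB
      obtain ⟨hA1, hA2, hA3⟩ := hpA
      have hx1 : a - r < p.1 := by nlinarith [sq_nonneg (p.2 - b), sq_nonneg (p.1 - a + r)]
      have hx2 : p.1 < a + r := by nlinarith [sq_nonneg (p.2 - b), sq_nonneg (p.1 - a - r)]
      refine ⟨⟨max_lt hA1 hx1, lt_of_lt_of_le hx2 (le_max_right _ _)⟩, hA2, hA3⟩
    calc volume (eBall (a, b) r ∩ regA)
        ≤ volume (regionBetween (fun _ => (0:ℝ)) (fun x => x⁻¹) (Ioo u v)) :=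
          measure_mono hsub
      _ = ENNReal.ofReal (Real.log (v / u)) := vol_region_aux u v hu0 huv
      _ ≤ ENNReal.ofReal (Real.log (1 + 2 * r)) := by
          apply ENNReal.ofReal_le_ofReal
          apply Real.log_le_log (by positivity)
          rw [div_le_iff₀ hu0]
          have hvle : v ≤ (1 + 2 * r) * u := by
            apply max_le
            · nlinarith
            · have h1 : a - r ≤ u := le_max_right _ _
              nlinarith [mul_nonneg (by linarith : (0:ℝ) ≤ 2 * r) (by linarith : (0:ℝ) ≤ u - 1)]
          exact hvle
  · have hbr0 : 0 < b - r := by linarith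
    have hbr1 : b - r < 1 := by linarith
    rw [show 2 * ((1 / 2) * Real.log (1 + 2 * r / (b - r))) =
        Real.log (1 + 2 * r / (b - r)) by ring]
    apply Real.log_le_log (by positivity)
    have : 2 * r ≤ 2 * r / (b - r) := by
      rw [le_div_iff₀ hbr0]; nlinarith
    linarith
end
end

section
/- Let b > 3 and b/3 ≤ r < b. Then the Gaussian measure restricted to the upper half plane of B_e((a,b),r) is at most 1/2, and the hyperbolic radius s = (1/2) log(1 + 2r/(b-r)) satisfies s ≥ (1/2) log 2; hence m_1(B_e((a,b),r)) ≤ (1/log 2)·s... i.e., m_1(B_e((a,b),r)) ≤ c·s for c = 1/log 2. -/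
open MeasureTheory Real Set

noncomputable section

lemma gauss_full : ∫⁻ x : ℝ, ENNReal.ofReal (Real.exp (-x ^ 2 / 2)) = ENNReal.ofReal (Real.sqrt (2 * π)) := by
  rw [show (fun x : ℝ => ENNReal.ofReal (Real.exp (-x ^ 2 / 2)))
      = fun x : ℝ => ENNReal.ofReal (Real.exp (-(1/2) * x ^ 2)) by
    funext x; congr 2; ring]
  rw [← ofReal_integral_eq_lintegral_ofReal]
  · rw [integral_gaussian]; congr 2; field_simp
  · exact integrable_exp_neg_mul_sq (by norm_num)
  · filter_upwards with x using (Real.exp_pos _).le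

lemma gauss_half : ∫⁻ x : ℝ in Ioi 0, ENNReal.ofReal (Real.exp (-x ^ 2 / 2)) = ENNReal.ofReal (Real.sqrt (2 * π) / 2) := by
  rw [show (fun x : ℝ => ENNReal.ofReal (Real.exp (-x ^ 2 / 2)))
      = fun x : ℝ => ENNReal.ofReal (Real.exp (-(1/2) * x ^ 2)) by
    funext x; congr 2; ring]
  rw [← ofReal_integral_eq_lintegral_ofReal]
  · rw [integral_gaussian_Ioi]; congr 3; field_simp
  · exact (integrable_exp_neg_mul_sq (by norm_num)).restrict
  · filter_upwards with x using (Real.exp_pos _).le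

lemma m1_univ : (((volume : Measure (ℝ×ℝ)).restrict {p : ℝ × ℝ | 0 < p.2}).withDensity
    (fun p => ENNReal.ofReal ((2 * π)⁻¹ * Real.exp (-(p.1 ^ 2 + p.2 ^ 2) / 2)))) Set.univ
    = ENNReal.ofReal (1/2) := by
  rw [withDensity_apply _ MeasurableSet.univ, Measure.restrict_univ]
  have hS : ((volume : Measure (ℝ × ℝ)).restrict {p : ℝ × ℝ | 0 < p.2}) = volume.prod (volume.restrict (Ioi 0)) := by
    have : {p : ℝ × ℝ | 0 < p.2} = (univ : Set ℝ) ×ˢ Ioi (0:ℝ) := by ext p; simp [Set.mem_prod]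
    rw [this, Measure.volume_eq_prod, ← Measure.prod_restrict, Measure.restrict_univ]
  rw [hS]
  have hfun : ∀ p : ℝ × ℝ, ENNReal.ofReal ((2 * π)⁻¹ * Real.exp (-(p.1 ^ 2 + p.2 ^ 2) / 2))
      = ENNReal.ofReal ((2 * π)⁻¹) * ((fun x : ℝ => ENNReal.ofReal (Real.exp (-x ^ 2 / 2))) p.1 * (fun x : ℝ => ENNReal.ofReal (Real.exp (-x ^ 2 / 2))) p.2) := by
    intro p
    simp only
    rw [← ENNReal.ofReal_mul (Real.exp_pos _).le, ← Real.exp_add,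
        ← ENNReal.ofReal_mul (by positivity)]
    congr 2; ring
  simp only [hfun]
  rw [lintegral_const_mul _ (by
    apply Measurable.fun_mul <;> exact (Measurable.exp (by fun_prop)).ennreal_ofReal)]
  have key := lintegral_prod_mul (μ := (volume : Measure ℝ)) (ν := volume.restrict (Ioi 0))
      (f := fun x : ℝ => ENNReal.ofReal (Real.exp (-x ^ 2 / 2)))
      (g := fun x : ℝ => ENNReal.ofReal (Real.exp (-x ^ 2 / 2)))
      (by exact (Measurable.exp (by fun_prop)).ennreal_ofReal.aemeasurable)
      (by exact (Measurable.exp (by fun_prop)).ennreal_ofReal.aemeasurable)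
  simp only at key
  rw [key]
  rw [gauss_full, gauss_half, ← ENNReal.ofReal_mul (Real.sqrt_nonneg _),
      ← ENNReal.ofReal_mul (by positivity)]
  congr 1
  have : Real.sqrt (2*π) * (Real.sqrt (2*π)/2) = (2*π)/2 := by
    rw [mul_div_assoc', Real.mul_self_sqrt (by positivity)]
  rw [this]
  field_simp

theorem stmt10 (a b r : ℝ) (hb : 3 < b) (hr1 : b / 3 ≤ r) (hr2 : r < b) :
    m1 (eBall (a, b) r) ≤ ENNReal.ofReal (1 / 2) ∧
    (1 / 2) * Real.log 2 ≤ (1 / 2) * Real.log (1 + 2 * r / (b - r)) ∧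
    m1 (eBall (a, b) r) ≤
      ENNReal.ofReal ((1 / Real.log 2) * ((1 / 2) * Real.log (1 + 2 * r / (b - r)))) := by
  have hbr : 0 < b - r := by linarith
  have h2le : (2:ℝ) ≤ 1 + 2 * r / (b - r) := by
    have : (1:ℝ) ≤ 2 * r / (b - r) := (one_le_div hbr).2 (by linarith)
    linarith
  have hlog : Real.log 2 ≤ Real.log (1 + 2 * r / (b - r)) :=
    Real.log_le_log two_pos h2le
  have hlog2 : 0 < Real.log 2 := Real.log_pos one_lt_two
  have hm1 : m1 (eBall (a, b) r) ≤ ENNReal.ofReal (1 / 2) := by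
    calc m1 (eBall (a, b) r) ≤ m1 Set.univ := measure_mono (subset_univ _)
    _ = ENNReal.ofReal (1/2) := m1_univ
  refine ⟨hm1, by nlinarith, hm1.trans (ENNReal.ofReal_le_ofReal ?_)⟩
  have hs : (1/2) * Real.log 2 ≤ (1/2) * Real.log (1 + 2 * r / (b - r)) := by linarith
  calc (1:ℝ)/2 = (1 / Real.log 2) * ((1/2) * Real.log 2) := by field_simp
  _ ≤ (1 / Real.log 2) * ((1/2) * Real.log (1 + 2 * r / (b - r))) := by
      apply mul_le_mul_of_nonneg_left hs (by positivity)
end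
end

section
/- Let b > 3 and 0 < r < b/3. Then m_1(B_e((a,b),r)) ≤ (e^{-(b-r)^2/2}/(b-r)) · min{1, 2r}, where m_1 is the upper-half-plane restriction of the standard Gaussian measure. -/
open MeasureTheory Real Set

noncomputable section

lemma tail_int (t : ℝ) : ∫ y in Ioi t, y * Real.exp (-(1/2) * y^2) = Real.exp (-(1/2) * t^2) := by
  have hderiv : ∀ x ∈ Ici t, HasDerivAt (fun y => -Real.exp (-(1/2) * y^2))
      (x * Real.exp (-(1/2) * x^2)) x := by
    intro x _
    have h : HasDerivAt (fun y : ℝ => -(1/2) * y^2) (-(1/2) * (2 * x)) x := by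
      simpa using ((hasDerivAt_pow 2 x).const_mul (-(1/2) : ℝ))
    have : HasDerivAt (fun y => -Real.exp (-(1/2) * y^2)) (-(Real.exp (-(1/2) * x^2) * (-(1/2) * (2 * x)))) x := (h.exp).neg
    convert this using 1
    ring
  have hint : IntegrableOn (fun y => y * Real.exp (-(1/2) * y^2)) (Ioi t) := by
    have := integrable_mul_exp_neg_mul_sq (b := 1/2) (by norm_num)
    exact this.integrableOn
  have hlim : Filter.Tendsto (fun y => -Real.exp (-(1/2) * y^2)) Filter.atTop (nhds 0) := by
    rw [← neg_zero]
    apply Filter.Tendsto.neg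
    have : Filter.Tendsto (fun y : ℝ => -(1/2) * y^2) Filter.atTop Filter.atBot := by
      apply Filter.Tendsto.const_mul_atTop_of_neg (by norm_num)
      exact Filter.tendsto_pow_atTop (by norm_num) 
    exact Real.tendsto_exp_atBot.comp this
  have := integral_Ioi_of_hasDerivAt_of_tendsto' hderiv hint hlim
  rw [this]; ring

lemma tail_bound (t : ℝ) (ht : 0 < t) :
    ∫ y in Ioi t, Real.exp (-(1/2) * y^2) ≤ Real.exp (-(1/2) * t^2) / t := by
  have hint1 : IntegrableOn (fun y => Real.exp (-(1/2) * y^2)) (Ioi t) :=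
    (integrable_exp_neg_mul_sq (by norm_num : (0:ℝ) < 1/2)).integrableOn
  have hint2 : IntegrableOn (fun y => y / t * Real.exp (-(1/2) * y^2)) (Ioi t) := by
    have := (integrable_mul_exp_neg_mul_sq (b := 1/2) (by norm_num)).integrableOn (s := Ioi t)
    simpa [IntegrableOn, div_eq_mul_inv, mul_comm, mul_assoc, mul_left_comm] using this.mul_const t⁻¹
  have hmono : ∫ y in Ioi t, Real.exp (-(1/2) * y^2) ≤
      ∫ y in Ioi t, y / t * Real.exp (-(1/2) * y^2) := by
    apply setIntegral_mono_on hint1 hint2 measurableSet_Ioi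
    intro y hy
    have h1 : 1 ≤ y / t := (one_le_div ht).2 (le_of_lt hy)
    nlinarith [Real.exp_pos (-(1/2) * y^2)]
  have heq : ∫ y in Ioi t, y / t * Real.exp (-(1/2) * y^2) = Real.exp (-(1/2) * t^2) / t := by
    have : ∫ y in Ioi t, y / t * Real.exp (-(1/2) * y^2)
        = (∫ y in Ioi t, y * Real.exp (-(1/2) * y^2)) / t := by
      rw [← integral_div]
      congr 1; ext y; ring
    rw [this, tail_int]
  linarith

lemma tail_lintegral (t : ℝ) (ht : 0 < t) :
    ∫⁻ y in Ioi t, ENNReal.ofReal (Real.exp (-(1/2) * y^2)) ≤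
      ENNReal.ofReal (Real.exp (-(1/2) * t^2) / t) := by
  rw [← ofReal_integral_eq_lintegral_ofReal
      ((integrable_exp_neg_mul_sq (by norm_num : (0:ℝ) < 1/2)).integrableOn)
      (Filter.Eventually.of_forall fun y => (Real.exp_pos _).le)]
  exact ENNReal.ofReal_le_ofReal (tail_bound t ht)

theorem stmt11 (a b r : ℝ) (hb : 3 < b) (hr0 : 0 < r) (hr1 : r < b / 3) :
    m1 (eBall (a, b) r) ≤
      ENNReal.ofReal (Real.exp (-(b - r) ^ 2 / 2) / (b - r) * min 1 (2 * r)) := by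
  have ht : 0 < b - r := by linarith
  set T : ℝ := Real.exp (-(1/2) * (b - r) ^ 2) / (b - r) with hT
  have hT0 : 0 ≤ T := by positivity
  have hTeq : Real.exp (-(b - r) ^ 2 / 2) / (b - r) = T := by rw [hT]; ring_nf
  rw [hTeq]
  -- the rectangle
  set R : Set (ℝ × ℝ) := Ioo (a - r) (a + r) ×ˢ Ioo (b - r) (b + r) with hR
  have hRmeas : MeasurableSet R := measurableSet_Ioo.prod measurableSet_Ioo
  have hsub : eBall (a, b) r ⊆ R := by
    rintro ⟨x, y⟩ hp
    simp only [eBall, mem_setOf_eq] at hp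
    refine ⟨⟨?_, ?_⟩, ?_, ?_⟩ <;> nlinarith [sq_nonneg (x - a), sq_nonneg (y - b)]
  have hRU : R ⊆ {p : ℝ × ℝ | 0 < p.2} := by
    rintro ⟨x, y⟩ ⟨_, hy⟩
    exact lt_trans ht hy.1
  have step1 : m1 (eBall (a, b) r) ≤ m1 R := measure_mono hsub
  -- compute m1 R as a product
  have step2 : m1 R = (∫⁻ x in Ioo (a - r) (a + r),
        ENNReal.ofReal ((2 * π)⁻¹ * Real.exp (-(1/2) * x ^ 2))) *
      ∫⁻ y in Ioo (b - r) (b + r), ENNReal.ofReal (Real.exp (-(1/2) * y ^ 2)) := by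
    rw [m1, withDensity_apply _ hRmeas, Measure.restrict_restrict hRmeas,
      inter_eq_left.2 hRU]
    have key : ∀ p : ℝ × ℝ,
        ENNReal.ofReal ((2 * π)⁻¹ * Real.exp (-(p.1 ^ 2 + p.2 ^ 2) / 2)) =
        ENNReal.ofReal ((2 * π)⁻¹ * Real.exp (-(1/2) * p.1 ^ 2)) *
          ENNReal.ofReal (Real.exp (-(1/2) * p.2 ^ 2)) := by
      intro p
      rw [← ENNReal.ofReal_mul (by positivity), mul_assoc, ← Real.exp_add]
      congr 2
      ring
    rw [lintegral_congr key, hR, Measure.volume_eq_prod, ← Measure.prod_restrict]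
    have hm0 : Measurable fun x : ℝ => Real.exp (-(1/2) * x ^ 2) :=
      ((measurable_id.pow_const 2).const_mul (-(1/2))).exp
    have hm1 : Measurable fun x : ℝ => ENNReal.ofReal ((2 * π)⁻¹ * Real.exp (-(1/2) * x ^ 2)) :=
      (hm0.const_mul _).ennreal_ofReal
    have hm2 : Measurable fun y : ℝ => ENNReal.ofReal (Real.exp (-(1/2) * y ^ 2)) :=
      hm0.ennreal_ofReal
    exact lintegral_prod_mul hm1.aemeasurable hm2.aemeasurable
  have hF2 : (∫⁻ y in Ioo (b - r) (b + r), ENNReal.ofReal (Real.exp (-(1/2) * y ^ 2))) ≤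
      ENNReal.ofReal T := by
    refine le_trans (lintegral_mono' (Measure.restrict_mono Ioo_subset_Ioi_self le_rfl) le_rfl) ?_
    exact tail_lintegral _ ht
  rcases le_or_gt (2 * r) 1 with h2r | h2r
  · -- small radius: use the width bound
    have hF1 : (∫⁻ x in Ioo (a - r) (a + r),
        ENNReal.ofReal ((2 * π)⁻¹ * Real.exp (-(1/2) * x ^ 2))) ≤
        ENNReal.ofReal ((2 * π)⁻¹ * (2 * r)) := by
      calc (∫⁻ x in Ioo (a - r) (a + r),
            ENNReal.ofReal ((2 * π)⁻¹ * Real.exp (-(1/2) * x ^ 2)))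
          ≤ ∫⁻ _ in Ioo (a - r) (a + r), ENNReal.ofReal ((2 * π)⁻¹) := by
            refine lintegral_mono fun x => ENNReal.ofReal_le_ofReal ?_
            have h1 : Real.exp (-(1/2) * x ^ 2) ≤ 1 :=
              Real.exp_le_one_iff.2 (by nlinarith [sq_nonneg x])
            have h2 : (0:ℝ) ≤ (2 * π)⁻¹ := by positivity
            nlinarith
        _ = ENNReal.ofReal ((2 * π)⁻¹) * volume (Ioo (a - r) (a + r)) := by
            rw [setLIntegral_const]
        _ = ENNReal.ofReal ((2 * π)⁻¹ * (2 * r)) := by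
            rw [Real.volume_Ioo, ← ENNReal.ofReal_mul (by positivity)]
            congr 1
            ring
    calc m1 (eBall (a, b) r) ≤ ENNReal.ofReal ((2 * π)⁻¹ * (2 * r)) * ENNReal.ofReal T := by
          rw [step2] at step1
          exact le_trans step1 (mul_le_mul' hF1 hF2)
      _ ≤ ENNReal.ofReal (T * min 1 (2 * r)) := by
          rw [← ENNReal.ofReal_mul (by positivity)]
          refine ENNReal.ofReal_le_ofReal ?_
          rw [min_eq_right h2r]
          have hpi : (2 * π)⁻¹ ≤ 1 := by
            rw [inv_le_one_iff₀]
            right; nlinarith [Real.pi_gt_three]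
          nlinarith [mul_le_mul_of_nonneg_right hpi
            (mul_nonneg (by linarith : (0:ℝ) ≤ 2 * r) hT0)]
  · -- large radius: integrate over all of ℝ
    have hF1 : (∫⁻ x in Ioo (a - r) (a + r),
        ENNReal.ofReal ((2 * π)⁻¹ * Real.exp (-(1/2) * x ^ 2))) ≤
        ENNReal.ofReal ((2 * π)⁻¹ * Real.sqrt (π / (1/2))) := by
      refine le_trans (setLIntegral_le_lintegral _ _) ?_
      rw [← ofReal_integral_eq_lintegral_ofReal
        ((integrable_exp_neg_mul_sq (by norm_num : (0:ℝ) < 1/2)).const_mul _)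
        (Filter.Eventually.of_forall fun x => by positivity)]
      refine ENNReal.ofReal_le_ofReal ?_
      rw [integral_const_mul, integral_gaussian]
    have hc : (2 * π)⁻¹ * Real.sqrt (π / (1/2)) ≤ 1 := by
      have h1 : π / (1/2) = 2 * π := by ring
      rw [h1]
      have hs := Real.sq_sqrt (by positivity : (0:ℝ) ≤ 2 * π)
      have hs0 := Real.sqrt_nonneg (2 * π)
      rw [inv_mul_le_iff₀ (by positivity)]
      nlinarith [Real.pi_gt_three, sq_nonneg (Real.sqrt (2 * π) - 1)]
    calc m1 (eBall (a, b) r) ≤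
          ENNReal.ofReal ((2 * π)⁻¹ * Real.sqrt (π / (1/2))) * ENNReal.ofReal T := by
          rw [step2] at step1
          exact le_trans step1 (mul_le_mul' hF1 hF2)
      _ ≤ ENNReal.ofReal (T * min 1 (2 * r)) := by
          rw [← ENNReal.ofReal_mul (by positivity)]
          refine ENNReal.ofReal_le_ofReal ?_
          rw [min_eq_left h2r.le]
          nlinarith [Real.sqrt_nonneg (π / (1/2))]
end
end

section
/- There exists a constant c > 0 such that for every hyperbolic ball B_h(w,s) in the upper half-plane model of the hyperbolic plane, m_2(B_h(w,s)) ≤ c·s, where m_2 is Lebesgue measure restricted to A = {(x,y) : x > 1, 0 < y < 1/x}. -/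
open MeasureTheory Real Set

noncomputable section

lemma hBall_subset_strip (w : ℝ × ℝ) (s : ℝ) (hw : 0 < w.2) (hs : 0 < s) :
    hBall w s ⊆ {p : ℝ × ℝ | p.2 ∈ Ioo (w.2 * rexp (-s)) (w.2 * rexp s)} := by
  rintro ⟨x, y⟩ ⟨hy, hd⟩
  simp only [hBall, mem_setOf_eq] at hy hd
  have h2 : (0:ℝ) < 2 * y * w.2 := by positivity
  have hD : (x - w.1) ^ 2 + (y - w.2) ^ 2 < (Real.cosh s - 1) * (2 * y * w.2) := by
    have h' : ((x - w.1) ^ 2 + (y - w.2) ^ 2) / (2 * y * w.2) < Real.cosh s - 1 := by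
      linarith
    exact (div_lt_iff₀ h2).mp h'
  have hsinh : 0 < Real.sinh s := Real.sinh_pos_iff.mpr hs
  have hsq : Real.cosh s ^ 2 - Real.sinh s ^ 2 = 1 := Real.cosh_sq_sub_sinh_sq s
  have hsq2 : w.2 ^ 2 * Real.cosh s ^ 2 - w.2 ^ 2 * Real.sinh s ^ 2 = w.2 ^ 2 := by
    rw [← mul_sub, hsq, mul_one]
  have key : (y - w.2 * Real.cosh s) ^ 2 < (w.2 * Real.sinh s) ^ 2 := by
    nlinarith [sq_nonneg (x - w.1), hsq2]
  have hbs : 0 < w.2 * Real.sinh s := by positivity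
  constructor
  · rw [← Real.cosh_sub_sinh]
    nlinarith [key, hbs]
  · rw [← Real.cosh_add_sinh]
    nlinarith [key, hbs]

theorem stmt14 :
    ∃ c : ℝ, 0 < c ∧ ∀ (w : ℝ × ℝ) (s : ℝ), 0 < w.2 → 0 < s →
      m2 (hBall w s) ≤ ENNReal.ofReal (c * s) := by
  refine ⟨2, two_pos, ?_⟩
  intro w s hw hs
  set b := w.2 with hb
  set l := b * rexp (-s) with hldef
  set u := b * rexp s with hudef
  have hl : 0 < l := by positivity
  have hu : 0 < u := by positivity
  have hlu : l < u := by
    have : rexp (-s) < rexp s := Real.exp_lt_exp.mpr (by linarith)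
    exact (mul_lt_mul_iff_right₀ hw).mpr this
  set K : Set ℝ := Ioo l u ∩ Ioo 0 1 with hK
  have hKmeas : MeasurableSet K := measurableSet_Ioo.inter measurableSet_Ioo
  have hKsub : K ⊆ Icc l u := fun y hy => Ioo_subset_Icc_self hy.1
  set T : Set (ℝ × ℝ) := regionBetween (fun _ => (1:ℝ)) (fun y => y⁻¹) K with hT
  have hTmeas : MeasurableSet T :=
    measurableSet_regionBetween measurable_const measurable_inv hKmeas
  have hstripmeas : MeasurableSet {p : ℝ × ℝ | p.2 ∈ Ioo l u} :=
    measurable_snd measurableSet_Ioo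
  -- step 1
  have h1 : m2 (hBall w s) ≤ volume ({p : ℝ × ℝ | p.2 ∈ Ioo l u} ∩ regA) := by
    calc m2 (hBall w s) ≤ m2 {p : ℝ × ℝ | p.2 ∈ Ioo l u} :=
          measure_mono (hBall_subset_strip w s hw hs)
      _ = volume ({p : ℝ × ℝ | p.2 ∈ Ioo l u} ∩ regA) :=
          Measure.restrict_apply hstripmeas
  -- step 2
  have h2 : {p : ℝ × ℝ | p.2 ∈ Ioo l u} ∩ regA = Prod.swap ⁻¹' T := by
    ext ⟨x, y⟩
    simp only [hT, regionBetween, regA, mem_inter_iff, mem_setOf_eq, mem_preimage,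
      Prod.swap_prod_mk, mem_Ioo, hK]
    constructor
    · rintro ⟨⟨hly, hyu⟩, hx1, hy0, hyx⟩
      have hx0 : (0:ℝ) < x := by linarith
      have hxy : x * y < 1 := by
        have := mul_lt_mul_of_pos_left hyx hx0
        rwa [mul_inv_cancel₀ (ne_of_gt hx0)] at this
      refine ⟨⟨⟨hly, hyu⟩, hy0, ?_⟩, hx1, ?_⟩
      · nlinarith
      · rw [show y⁻¹ = 1 / y by ring, lt_div_iff₀ hy0]; linarith
    · rintro ⟨⟨⟨hly, hyu⟩, hy0, hy1⟩, hx1, hxy⟩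
      have hx0 : (0:ℝ) < x := by linarith
      have hxy' : x * y < 1 := by
        rw [show y⁻¹ = 1 / y by ring, lt_div_iff₀ hy0] at hxy; linarith
      refine ⟨⟨hly, hyu⟩, hx1, hy0, ?_⟩
      rw [show x⁻¹ = 1 / x by ring, lt_div_iff₀ hx0]; linarith
  -- step 3
  have h3 : volume (Prod.swap ⁻¹' T) = volume T := by
    rw [Measure.volume_eq_prod]
    exact (Measure.measurePreserving_swap).measure_preimage
      hTmeas.nullMeasurableSet
  -- integrability facts
  have hinv_cont : ContinuousOn (fun y : ℝ => y⁻¹) (Icc l u) := by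
    apply ContinuousOn.inv₀ continuousOn_id
    intro y hy
    exact ne_of_gt (lt_of_lt_of_le hl hy.1)
  have hg_int' : IntegrableOn (fun y : ℝ => y⁻¹) (Icc l u) :=
    hinv_cont.integrableOn_Icc
  have hg_int : IntegrableOn (fun y : ℝ => y⁻¹) K := hg_int'.mono_set hKsub
  have hf_int : IntegrableOn (fun _ : ℝ => (1:ℝ)) K := by
    apply (integrableOn_const_iff (by simp)).mpr
    right
    calc volume K ≤ volume (Ioo (0:ℝ) 1) := measure_mono inter_subset_right
      _ < ⊤ := by simp
  have hfg : ∀ y ∈ K, (fun _ : ℝ => (1:ℝ)) y ≤ (fun y : ℝ => y⁻¹) y := by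
    intro y hy
    exact le_of_lt ((one_lt_inv₀ hy.2.1).mpr hy.2.2)
  -- step 4
  have h4 : volume T = ENNReal.ofReal (∫ y in K, (y⁻¹ - 1)) := by
    rw [Measure.volume_eq_prod, hT, volume_regionBetween_eq_integral hf_int hg_int hKmeas hfg]
    simp only [Pi.sub_apply]
  -- step 5: integral bound
  have h5 : ∫ y in K, (y⁻¹ - 1) ≤ 2 * s := by
    have step1 : ∫ y in K, (y⁻¹ - 1) ≤ ∫ y in K, y⁻¹ := by
      apply setIntegral_mono_on (hg_int.sub hf_int) hg_int hKmeas
      intro y _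
      simp
    have step2 : ∫ y in K, y⁻¹ ≤ ∫ y in Ioo l u, y⁻¹ := by
      apply setIntegral_mono_set (hg_int'.mono_set Ioo_subset_Icc_self)
      · filter_upwards [ae_restrict_mem measurableSet_Ioo] with y hy
        exact le_of_lt (inv_pos.mpr (lt_trans hl hy.1))
      · exact HasSubset.Subset.eventuallyLE inter_subset_left
    have step3 : ∫ y in Ioo l u, y⁻¹ = 2 * s := by
      rw [← integral_Ioc_eq_integral_Ioo, ← intervalIntegral.integral_of_le hlu.le,
        integral_inv_of_pos hl hu]
      have hul : u / l = rexp (2 * s) := by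
        rw [hudef, hldef, mul_div_mul_left _ _ (ne_of_gt hw), ← Real.exp_sub]
        ring_nf
      rw [hul, Real.log_exp]
    linarith
  -- conclude
  calc m2 (hBall w s) ≤ volume ({p : ℝ × ℝ | p.2 ∈ Ioo l u} ∩ regA) := h1
    _ = volume T := by rw [h2, h3]
    _ = ENNReal.ofReal (∫ y in K, (y⁻¹ - 1)) := h4
    _ ≤ ENNReal.ofReal (2 * s) := ENNReal.ofReal_le_ofReal h5
end
end

section
/- The centered Hardy–Littlewood maximal operator M_μ associated to μ = m_1 + m_2 on the hyperbolic plane is not of weak type (1,1): there is no constant C such that for every finite Borel measure ν (or integrable f) and every λ > 0, μ{w : M_μ ν(w) > λ} ≤ C ν(H)/λ. In particular, for the Dirac mass δ_{(R+1/2,1)} and λ = (R-1)^{3/2}/3, one has μ{w : M_μ δ_{(R+1/2,1)}(w) > λ} > 1/(2R) for all sufficiently large R, while ν(H)·λ^{-1} = 3/(R-1)^{3/2}. -/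
open MeasureTheory Real Set

noncomputable section

/-! ### Auxiliary lemmas -/

lemma habs' (a b : ℝ) (hab : a^2 < b^2) (hb : 0 ≤ b) : -b < a ∧ a < b := by
  constructor <;> nlinarith [sq_nonneg (a+b), sq_nonneg (a-b)]

lemma ball_geom (x y k p1 p2 : ℝ)
    (h1 : (p1-x)^2 + (p2-y)^2 < (k-1)*(2*p2*y)) :
    (p1-x)^2 + (p2 - y*k)^2 < (y*k)^2 - y^2 := by nlinarith [h1]

lemma hBall_meas (w : ℝ × ℝ) (s : ℝ) : MeasurableSet (hBall w s) := by
  have : hBall w s = {p : ℝ×ℝ | 0 < p.2} ∩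
      {p : ℝ×ℝ | 1 + ((p.1 - w.1) ^ 2 + (p.2 - w.2) ^ 2) / (2 * p.2 * w.2) < Real.cosh s} := rfl
  rw [this]
  apply MeasurableSet.inter
  · exact measurableSet_lt measurable_const measurable_snd
  · apply measurableSet_lt
    · exact Measurable.add measurable_const (Measurable.div (by fun_prop) (by fun_prop))
    · exact measurable_const

set_option maxHeartbeats 2000000 in
lemma numeric (R : ℝ) (hR : 100 ≤ R) :
    (Real.exp (-(R-2)^2/2) + 2*Real.sqrt (52/25*(R-2)⁻¹)*(R-2)⁻¹) * ((R-1)^((3:ℝ)/2)/3) < 1 := by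
  have ha : (98:ℝ) ≤ R - 2 := by linarith
  have ha0 : (0:ℝ) < R - 2 := by linarith
  have hb0 : (0:ℝ) < R - 1 := by linarith
  have hu0 : 0 ≤ Real.sqrt (R-2) := Real.sqrt_nonneg _
  have hv0 : 0 ≤ Real.sqrt (R-1) := Real.sqrt_nonneg _
  have hc0 : 0 ≤ Real.sqrt (52/25) := Real.sqrt_nonneg _
  have hu2 : Real.sqrt (R-2)^2 = R - 2 := Real.sq_sqrt ha0.le
  have hv2 : Real.sqrt (R-1)^2 = R - 1 := Real.sq_sqrt hb0.le
  have hc2 : Real.sqrt (52/25)^2 = 52/25 := Real.sq_sqrt (by norm_num)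
  set u := Real.sqrt (R-2) with hu
  set v := Real.sqrt (R-1) with hv
  set c := Real.sqrt (52/25) with hc
  have hu98 : 98 ≤ u^2 := by rw [hu2]; linarith
  have hu9 : 9 ≤ u := by nlinarith [hu98, hu0]
  have hupos : (0:ℝ) < u := by linarith
  have hrw1 : Real.sqrt (52/25*(R-2)⁻¹) = c / u := by
    rw [← div_eq_mul_inv, Real.sqrt_div (by norm_num)]
  have hrw2 : (R-1)^((3:ℝ)/2) = (R-1) * v := by
    have h32 : ((3:ℝ)/2) = 1 + 1/2 := by norm_num
    rw [h32, Real.rpow_add hb0, Real.rpow_one, hv, Real.sqrt_eq_rpow]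
  set E := Real.exp (-(R-2)^2/2) with hE
  have hE0 : 0 < E := Real.exp_pos _
  have hE6 : E * (R-2)^6 ≤ 216 := by
    have h3 : Real.exp ((R-2)^2/2) = Real.exp ((R-2)^2/6)^3 := by
      rw [← Real.exp_nat_mul]
      congr 1
      push_cast
      ring
    have h4 : (R-2)^2/6 + 1 ≤ Real.exp ((R-2)^2/6) := Real.add_one_le_exp _
    have h5 : (R-2)^6/216 ≤ Real.exp ((R-2)^2/2) := by
      rw [h3]
      have hcube := pow_le_pow_left₀ (by positivity : (0:ℝ) ≤ (R-2)^2/6 + 1) h4 3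
      have ht : (0:ℝ) ≤ (R-2)^2/6 := by positivity
      nlinarith [hcube, ht]
    have hEeq : E = (Real.exp ((R-2)^2/2))⁻¹ := by
      rw [hE, ← Real.exp_neg]; congr 1; ring
    rw [hEeq]
    have hip := mul_le_mul_of_nonneg_right h5 (inv_nonneg.2 (Real.exp_pos ((R-2)^2/2)).le)
    have hinv : Real.exp ((R-2)^2/2) * (Real.exp ((R-2)^2/2))⁻¹ = 1 :=
      mul_inv_cancel₀ (ne_of_gt (Real.exp_pos _))
    nlinarith [hip, hinv]
  rw [hrw1, hrw2]
  rw [← hu2] at hE6 ⊢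
  rw [← hv2]
  have hv2u : v^2 = u^2 + 1 := by rw [hv2, hu2]; ring
  clear_value u v c E
  clear hrw1 hrw2 hu hv hc hE hu2 hv2
  have hsimp : E + 2*(c/u)*(u^2)⁻¹ = (E*u^3 + 2*c)/u^3 := by field_simp
  have hgoal2 : (E + 2 * (c / u) * (u ^ 2)⁻¹) * (v ^ 2 * v / 3) < 1 := by
    rw [hsimp, div_mul_eq_mul_div, div_lt_one (by positivity)]
    have hvu : v ≤ (1006/1000)*u := by
      have hsq : v^2 < ((1006/1000)*u)^2 := by rw [hv2u]; nlinarith [hu98]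
      exact (habs' v _ hsq (by positivity)).2.le
    have hv3 : v^3 ≤ (1006/1000)^3 * u^3 := by nlinarith [pow_le_pow_left₀ hv0 hvu 3]
    have hc145 : c ≤ 29/20 := by nlinarith [hc2, hc0]
    have hu3 : 882 ≤ u^3 := by nlinarith [hu9, hu98, hu0]
    have hu6 : 941192 ≤ u^6 := by
      have hcube := pow_le_pow_left₀ (by norm_num : (0:ℝ) ≤ 98) hu98 3
      nlinarith [hcube]
    have hEu6 : E * u^6 ≤ 1 := by nlinarith [hE6, hu6, mul_nonneg hE0.le (pow_nonneg hu0 6)]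
    have hint1 : E*u^3*v^3 ≤ (1006/1000)^3 * (E*u^6) := by
      nlinarith [mul_le_mul_of_nonneg_left hv3 (mul_nonneg hE0.le (pow_nonneg hu0 3))]
    have hint2 : c*v^3 ≤ (29/20)*((1006/1000)^3*u^3) :=
      mul_le_mul hc145 hv3 (pow_nonneg hv0 3) (by norm_num)
    nlinarith [hint1, hint2, hEu6, hu3]
  exact hgoal2

set_option maxHeartbeats 2000000 in
lemma muB_le (R x y : ℝ) (hR : 100 ≤ R) (hx1 : R - 51/100 < x) (hx2 : x < R)
    (hy1 : 0 < y) (hy2 : y < R⁻¹) :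
    ∃ s : ℝ, 0 < s ∧ ((R + 1/2 : ℝ), (1:ℝ)) ∈ hBall (x, y) s ∧
      mu (hBall (x, y) s) ≤
        ENNReal.ofReal (Real.exp (-(R-2)^2/2)
          + 2 * Real.sqrt ((52/25) * (R-2)⁻¹) * (R-2)⁻¹) := by
  have hR0 : (0:ℝ) < R := by linarith
  have hyR : y < 1/100 := lt_of_lt_of_le hy2 (by
    rw [inv_le_comm₀ (by linarith) (by norm_num)]; norm_num; linarith)
  obtain ⟨D0, hD0⟩ : ∃ D0 : ℝ, D0 = (x - (R + 1/2))^2 + (y - 1)^2 := ⟨_, rfl⟩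
  have hD0lb : 1/4 ≤ D0 := by rw [hD0]; nlinarith [sq_nonneg (y - 1)]
  have hD0ub : D0 ≤ 20201/10000 := by rw [hD0]; nlinarith []
  obtain ⟨k, hkdef⟩ : ∃ k : ℝ, k = 2 + D0 / (2*y) := ⟨_, rfl⟩
  have hk2 : 2 ≤ k := by
    have h0 : 0 ≤ D0 / (2*y) := by positivity
    linarith
  obtain ⟨s, hsdef⟩ : ∃ s : ℝ, s = Real.arsinh (Real.sqrt (k^2 - 1)) := ⟨_, rfl⟩
  have hs : 0 < s := by
    rw [hsdef, ← Real.arsinh_zero]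
    exact Real.arsinh_lt_arsinh.2 (Real.sqrt_pos.2 (by nlinarith))
  have hcosh : Real.cosh s = k := by
    rw [hsdef, Real.cosh_arsinh, Real.sq_sqrt (by nlinarith : (0:ℝ) ≤ k^2 - 1)]
    have h1 : 1 + (k^2 - 1) = k^2 := by ring
    rw [h1, Real.sqrt_sq (by linarith)]
  have hmem : ((R + 1/2 : ℝ), (1:ℝ)) ∈ hBall (x, y) s := by
    refine ⟨by norm_num, ?_⟩
    rw [hcosh]
    show 1 + (((R + 1/2) - x)^2 + (1 - y)^2) / (2 * 1 * y) < k
    have h2 : ((R + 1/2) - x)^2 + (1 - y)^2 = D0 := by rw [hD0]; ring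
    have h3 : (2:ℝ) * 1 * y = 2 * y := by ring
    rw [h2, h3, hkdef]
    have h0 : 0 ≤ D0 / (2*y) := by positivity
    linarith
  refine ⟨s, hs, hmem, ?_⟩
  set B := hBall (x, y) s with hBdef
  have hBmeas : MeasurableSet B := hBall_meas _ _
  obtain ⟨h, hhdef⟩ : ∃ h : ℝ, h = y * k := ⟨_, rfl⟩
  have h_eq : h = 2*y + D0/2 := by rw [hhdef, hkdef]; field_simp
  have hh_ub : h ≤ 26/25 := by rw [h_eq]; nlinarith
  have hh_lb : 1/8 ≤ h := by rw [h_eq]; nlinarith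
  have hh0 : (0:ℝ) ≤ h := by linarith
  have hgeom : ∀ p ∈ B, (p.1 - x)^2 + (p.2 - h)^2 < h^2 - y^2 ∧ 0 < p.2 := by
    intro p hp
    obtain ⟨hp2, hlt⟩ := hp
    rw [hcosh] at hlt
    have hden : 0 < 2 * p.2 * y := by positivity
    have h1 : (p.1 - x)^2 + (p.2 - y)^2 < (k - 1) * (2 * p.2 * y) := by
      have := (div_lt_iff₀ hden).1
        (by linarith : ((p.1 - x) ^ 2 + (p.2 - y) ^ 2) / (2 * p.2 * y) < k - 1)
      linarith
    have := ball_geom x y k p.1 p.2 h1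
    rw [hhdef]
    exact ⟨this, hp2⟩
  have hp1 : ∀ p ∈ B, R - 2 < p.1 ∧ p.1 < R + 2 := by
    intro p hp
    obtain ⟨hmain, hp2⟩ := hgeom p hp
    have h1 : (p.1 - x)^2 < h^2 := by nlinarith [sq_nonneg (p.2 - h), sq_nonneg y]
    obtain ⟨ha1, ha2⟩ := habs' _ _ h1 hh0
    exact ⟨by linarith, by linarith⟩
  have hsub1 : B ⊆ Ioo (x-h) (x+h) ×ˢ Ioo 0 (2*h) := by
    intro p hp
    obtain ⟨hmain, hp2⟩ := hgeom p hp
    have h1 : (p.1 - x)^2 < h^2 := by nlinarith [sq_nonneg (p.2 - h), sq_nonneg y]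
    obtain ⟨ha1, ha2⟩ := habs' _ _ h1 hh0
    have h2 : (p.2 - h)^2 < h^2 := by nlinarith [sq_nonneg (p.1 - x), sq_nonneg y]
    obtain ⟨hb1, hb2⟩ := habs' _ _ h2 hh0
    exact Set.mem_prod.2 ⟨Set.mem_Ioo.2 ⟨by linarith, by linarith⟩,
      Set.mem_Ioo.2 ⟨hp2, by linarith⟩⟩
  -- m1 bound
  have hE0pos : (0:ℝ) < Real.exp (-(R-2)^2/2) := Real.exp_pos _
  have hm1 : m1 B ≤ ENNReal.ofReal (Real.exp (-(R-2)^2/2)) := by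
    have hpt : ∀ p ∈ B,
        ENNReal.ofReal ((2*π)⁻¹ * Real.exp (-(p.1^2+p.2^2)/2)) ≤
        ENNReal.ofReal ((2*π)⁻¹ * Real.exp (-(R-2)^2/2)) := by
      intro p hp
      apply ENNReal.ofReal_le_ofReal
      have h1 := (hp1 p hp).1
      have hexp : -(p.1^2+p.2^2)/2 ≤ -(R-2)^2/2 := by nlinarith [sq_nonneg p.2]
      exact mul_le_mul_of_nonneg_left (Real.exp_le_exp.2 hexp) (by positivity)
    calc m1 B = ∫⁻ p in B, ENNReal.ofReal ((2*π)⁻¹ * Real.exp (-(p.1^2+p.2^2)/2))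
          ∂(volume.restrict {p : ℝ×ℝ | 0 < p.2}) := by
          rw [m1, withDensity_apply _ hBmeas]
      _ ≤ ∫⁻ _ in B, ENNReal.ofReal ((2*π)⁻¹ * Real.exp (-(R-2)^2/2))
          ∂(volume.restrict {p : ℝ×ℝ | 0 < p.2}) := setLIntegral_mono measurable_const hpt
      _ = ENNReal.ofReal ((2*π)⁻¹ * Real.exp (-(R-2)^2/2)) *
          (volume.restrict {p : ℝ×ℝ | 0 < p.2}) B := setLIntegral_const _ _
      _ ≤ ENNReal.ofReal ((2*π)⁻¹ * Real.exp (-(R-2)^2/2)) *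
          volume (Ioo (x-h) (x+h) ×ˢ Ioo 0 (2*h)) := by
          apply mul_le_mul_right
          rw [Measure.restrict_apply hBmeas]
          exact measure_mono (Set.inter_subset_left.trans hsub1)
      _ = ENNReal.ofReal ((2*π)⁻¹ * Real.exp (-(R-2)^2/2)) *
          (ENNReal.ofReal (x+h-(x-h)) * ENNReal.ofReal (2*h-0)) := by
          rw [Measure.volume_eq_prod, Measure.prod_prod, Real.volume_Ioo, Real.volume_Ioo]
      _ ≤ ENNReal.ofReal (Real.exp (-(R-2)^2/2)) := by
          have hxh : x+h-(x-h) = 2*h := by ring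
          rw [hxh, sub_zero, ← ENNReal.ofReal_mul (by positivity),
            ← ENNReal.ofReal_mul (by positivity)]
          apply ENNReal.ofReal_le_ofReal
          have hπ := Real.pi_gt_three
          have hinv : (2*π)⁻¹ ≤ 6⁻¹ := by
            apply inv_anti₀ (by norm_num) (by linarith)
          have h4h : (0:ℝ) ≤ 2*h*(2*h) := by positivity
          have h4h6 : 2*h*(2*h) ≤ 6 := by nlinarith
          have hkey : (2*π)⁻¹ * (2*h*(2*h)) ≤ 1 := by
            calc (2*π)⁻¹ * (2*h*(2*h)) ≤ 6⁻¹ * 6 :=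
              mul_le_mul hinv h4h6 h4h (by norm_num)
            _ = 1 := by norm_num
          nlinarith [mul_le_mul_of_nonneg_left hkey hE0pos.le]
  -- m2 bound
  have hδ : (0:ℝ) < (R-2)⁻¹ := by
    apply inv_pos.2; linarith
  obtain ⟨ρ, hρdef⟩ : ∃ ρ : ℝ, ρ = Real.sqrt (52/25*(R-2)⁻¹) := ⟨_, rfl⟩
  have hρ0 : 0 ≤ ρ := by rw [hρdef]; exact Real.sqrt_nonneg _
  have hρ2 : ρ^2 = 52/25*(R-2)⁻¹ := by
    rw [hρdef]; exact Real.sq_sqrt (by positivity)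
  have hsub2 : B ∩ regA ⊆ Ioo (x-ρ) (x+ρ) ×ˢ Ioo 0 ((R-2)⁻¹) := by
    rintro p ⟨hpB, hA1, hA2, hA3⟩
    obtain ⟨hmain, hp2⟩ := hgeom p hpB
    have h1 := (hp1 p hpB).1
    have hp2δ : p.2 < (R-2)⁻¹ := by
      apply lt_of_lt_of_le hA3
      apply inv_anti₀ (by linarith) h1.le
    have hsq : (p.1-x)^2 < ρ^2 := by
      rw [hρ2]
      have e1 : (p.1-x)^2 < p.2*(2*h-p.2) := by nlinarith [sq_nonneg y]
      have e2 : 2*h*p.2 ≤ 2*h*(R-2)⁻¹ := by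
        apply mul_le_mul_of_nonneg_left hp2δ.le (by linarith)
      have e3 : 2*h*(R-2)⁻¹ ≤ 52/25*(R-2)⁻¹ := by nlinarith
      nlinarith [sq_nonneg p.2]
    obtain ⟨hb1, hb2⟩ := habs' _ _ hsq hρ0
    exact Set.mem_prod.2 ⟨Set.mem_Ioo.2 ⟨by linarith, by linarith⟩,
      Set.mem_Ioo.2 ⟨hp2, hp2δ⟩⟩
  have hm2 : m2 B ≤ ENNReal.ofReal (2*ρ*(R-2)⁻¹) := by
    rw [m2, Measure.restrict_apply hBmeas]
    calc volume (B ∩ regA) ≤ volume (Ioo (x-ρ) (x+ρ) ×ˢ Ioo 0 ((R-2)⁻¹)) :=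
        measure_mono hsub2
      _ = ENNReal.ofReal (x+ρ-(x-ρ)) * ENNReal.ofReal ((R-2)⁻¹-0) := by
          rw [Measure.volume_eq_prod, Measure.prod_prod, Real.volume_Ioo, Real.volume_Ioo]
      _ = ENNReal.ofReal (2*ρ*(R-2)⁻¹) := by
          have e1 : x+ρ-(x-ρ) = 2*ρ := by ring
          rw [e1, sub_zero, ← ENNReal.ofReal_mul (by positivity)]
  calc mu B = m1 B + m2 B := by rw [mu, Measure.add_apply]
    _ ≤ ENNReal.ofReal (Real.exp (-(R-2)^2/2)) + ENNReal.ofReal (2*ρ*(R-2)⁻¹) :=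
        add_le_add hm1 hm2
    _ = ENNReal.ofReal (Real.exp (-(R-2)^2/2) + 2 * Real.sqrt ((52/25) * (R-2)⁻¹) * (R-2)⁻¹) := by
        rw [← ENNReal.ofReal_add hE0pos.le (by positivity), hρdef]

lemma pointwise (R x y : ℝ) (hR : 100 ≤ R) (hx1 : R - 51/100 < x) (hx2 : x < R)
    (hy1 : 0 < y) (hy2 : y < R⁻¹) :
    ENNReal.ofReal ((R - 1) ^ ((3 : ℝ) / 2) / 3) <
      Mmax mu (Measure.dirac ((R + 1/2 : ℝ), (1:ℝ))) (x, y) := by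
  obtain ⟨s, hs, hmem, hbound⟩ := muB_le R x y hR hx1 hx2 hy1 hy2
  have hBd0 : (0:ℝ) < Real.exp (-(R-2)^2/2) + 2 * Real.sqrt ((52/25) * (R-2)⁻¹) * (R-2)⁻¹ := by
    have : (0:ℝ) < R - 2 := by linarith
    positivity
  have hnum := numeric R hR
  have hlam0 : (0:ℝ) < (R - 1) ^ ((3 : ℝ) / 2) / 3 := by
    have : (0:ℝ) < R - 1 := by linarith
    positivity
  set Bd := Real.exp (-(R-2)^2/2) + 2 * Real.sqrt ((52/25) * (R-2)⁻¹) * (R-2)⁻¹ with hBddef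
  have hlt : (R - 1) ^ ((3 : ℝ) / 2) / 3 < Bd⁻¹ := by
    rw [← one_div, lt_div_iff₀ hBd0]
    nlinarith [hnum]
  have chain : ENNReal.ofReal ((R - 1) ^ ((3 : ℝ) / 2) / 3) < 1 / mu (hBall (x,y) s) := by
    calc ENNReal.ofReal ((R - 1) ^ ((3 : ℝ) / 2) / 3) < ENNReal.ofReal Bd⁻¹ :=
        (ENNReal.ofReal_lt_ofReal_iff (by positivity)).2 hlt
      _ = (ENNReal.ofReal Bd)⁻¹ := ENNReal.ofReal_inv_of_pos hBd0
      _ ≤ (mu (hBall (x,y) s))⁻¹ := ENNReal.inv_le_inv' hbound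
      _ = 1 / mu (hBall (x,y) s) := (one_div _).symm
  refine lt_of_lt_of_le chain ?_
  have hd : Measure.dirac ((R + 1/2 : ℝ), (1:ℝ)) (hBall (x,y) s) = 1 :=
    Measure.dirac_apply_of_mem hmem
  have hle : (Measure.dirac ((R + 1/2 : ℝ), (1:ℝ))) (hBall (x,y) s) / mu (hBall (x,y) s) ≤
      Mmax mu (Measure.dirac ((R + 1/2 : ℝ), (1:ℝ))) (x, y) := by
    unfold Mmax
    exact le_iSup₂ (f := fun t (_ : 0 < t) =>
      (Measure.dirac ((R + 1/2 : ℝ), (1:ℝ))) (hBall (x,y) t) / mu (hBall (x,y) t)) s hs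
  rw [hd] at hle
  exact hle

lemma key (R : ℝ) (hR : 100 ≤ R) :
    ENNReal.ofReal (1 / (2 * R)) <
      mu {w : ℝ × ℝ |
        ENNReal.ofReal ((R - 1) ^ ((3 : ℝ) / 2) / 3) <
          Mmax mu (Measure.dirac ((R + 1 / 2 : ℝ), (1 : ℝ))) w} := by
  have hR0 : (0:ℝ) < R := by linarith
  set S : Set (ℝ×ℝ) := Ioo (R-51/100) R ×ˢ Ioo 0 R⁻¹ with hS
  have hSsub : S ⊆ {w : ℝ × ℝ |
      ENNReal.ofReal ((R - 1) ^ ((3 : ℝ) / 2) / 3) <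
        Mmax mu (Measure.dirac ((R + 1 / 2 : ℝ), (1 : ℝ))) w} := by
    rintro ⟨a, b⟩ ⟨⟨h1, h2⟩, h3, h4⟩
    exact pointwise R a b hR h1 h2 h3 h4
  have hSA : S ⊆ regA := by
    rintro ⟨a, b⟩ ⟨⟨h1, h2⟩, h3, h4⟩
    refine ⟨by linarith, h3, lt_trans h4 ?_⟩
    apply inv_strictAnti₀ (by linarith) h2
  have hSmeas : MeasurableSet S := measurableSet_Ioo.prod measurableSet_Ioo
  calc ENNReal.ofReal (1 / (2 * R)) < ENNReal.ofReal (51/100 * R⁻¹) := by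
        rw [ENNReal.ofReal_lt_ofReal_iff (by positivity)]
        rw [div_lt_iff₀ (by positivity : (0:ℝ) < 2*R)]
        have hRR : R⁻¹ * R = 1 := inv_mul_cancel₀ hR0.ne'
        nlinarith [hRR]
    _ = volume S := by
        rw [hS, Measure.volume_eq_prod, Measure.prod_prod, Real.volume_Ioo, Real.volume_Ioo,
          sub_zero, ← ENNReal.ofReal_mul (by norm_num)]
        congr 2
        ring
    _ = m2 S := by rw [m2, Measure.restrict_apply hSmeas, Set.inter_eq_left.2 hSA]
    _ ≤ mu S := by rw [mu, Measure.add_apply]; exact le_add_self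
    _ ≤ _ := measure_mono hSsub

theorem stmt17 :
    (¬ ∃ C : ℝ, 0 < C ∧ ∀ (ν : Measure (ℝ × ℝ)), IsFiniteMeasure ν →
      ∀ lam : ℝ, 0 < lam →
        mu {w : ℝ × ℝ | ENNReal.ofReal lam < Mmax mu ν w} ≤
          ENNReal.ofReal C * ν {p : ℝ × ℝ | 0 < p.2} / ENNReal.ofReal lam) ∧
    (∃ R₀ : ℝ, ∀ R : ℝ, R₀ ≤ R →
      ENNReal.ofReal (1 / (2 * R)) <
        mu {w : ℝ × ℝ |
          ENNReal.ofReal ((R - 1) ^ ((3 : ℝ) / 2) / 3) <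
            Mmax mu (Measure.dirac ((R + 1 / 2 : ℝ), (1 : ℝ))) w}) := by
  constructor
  · rintro ⟨C, hC0, hw⟩
    set R : ℝ := max 100 (144*C^2 + 2) with hRdef
    have hR100 : (100:ℝ) ≤ R := le_max_left _ _
    have hRC : 144*C^2 + 2 ≤ R := le_max_right _ _
    have hR1 : (0:ℝ) < R - 1 := by linarith
    have hlam0 : (0:ℝ) < (R - 1) ^ ((3 : ℝ) / 2) / 3 := by positivity
    have h1 := hw (Measure.dirac ((R + 1/2 : ℝ), (1:ℝ))) inferInstance
      ((R - 1) ^ ((3 : ℝ) / 2) / 3) hlam0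
    have h2 := key R hR100
    have hν : Measure.dirac ((R + 1/2 : ℝ), (1:ℝ)) {p : ℝ × ℝ | 0 < p.2} = 1 :=
      Measure.dirac_apply_of_mem (by norm_num)
    rw [hν, mul_one] at h1
    have h3 : ENNReal.ofReal (1/(2*R)) <
        ENNReal.ofReal C / ENNReal.ofReal ((R - 1) ^ ((3 : ℝ) / 2) / 3) :=
      lt_of_lt_of_le h2 h1
    rw [← ENNReal.ofReal_div_of_pos hlam0,
      ENNReal.ofReal_lt_ofReal_iff (div_pos hC0 hlam0)] at h3
    -- now a real contradiction
    have hv12 : 12*C ≤ Real.sqrt (R-1) := by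
      have hsq : (12*C)^2 ≤ R - 1 := by nlinarith
      calc 12*C = Real.sqrt ((12*C)^2) := (Real.sqrt_sq (by positivity)).symm
        _ ≤ Real.sqrt (R-1) := Real.sqrt_le_sqrt hsq
    have hlam_eq : (R - 1) ^ ((3 : ℝ) / 2) = (R-1) * Real.sqrt (R-1) := by
      have h32 : ((3:ℝ)/2) = 1 + 1/2 := by norm_num
      rw [h32, Real.rpow_add hR1, Real.rpow_one, Real.sqrt_eq_rpow]
    have hlam_ge : 2*C*R ≤ (R - 1) ^ ((3 : ℝ) / 2) / 3 := by
      rw [hlam_eq]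
      have e1 : (R-1)*(12*C) ≤ (R-1)*Real.sqrt (R-1) :=
        mul_le_mul_of_nonneg_left hv12 hR1.le
      nlinarith [e1]
    have hcon : C / ((R - 1) ^ ((3 : ℝ) / 2) / 3) ≤ 1/(2*R) := by
      rw [div_le_div_iff₀ hlam0 (by positivity)]
      nlinarith [hlam_ge]
    linarith
  · exact ⟨100, key⟩
end
end

section
/- For every R sufficiently large and every point (x,y) with R < x < R+1, 0 < y < 1/x, the centered maximal function of the Dirac mass at (R+1/2, 1) with respect to μ = m_1 + m_2 satisfies M_μ δ_{(R+1/2,1)}((x,y)) ≥ 1/μ(B_e((R,1),1)) > (R-1)^{3/2}/3. -/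
open MeasureTheory Real Set

noncomputable section

/-! ### Auxiliary definitions and lemmas -/

/-- The upper half plane. -/
def UU : Set (ℝ × ℝ) := {p : ℝ × ℝ | 0 < p.2}

/-- The gaussian density. -/
def gdens (p : ℝ × ℝ) : ENNReal :=
  ENNReal.ofReal ((2 * π)⁻¹ * Real.exp (-(p.1 ^ 2 + p.2 ^ 2) / 2))

lemma measurable_gdens : Measurable gdens := by
  apply Measurable.ennreal_ofReal
  fun_prop

lemma measurableSet_UU : MeasurableSet UU :=
  measurableSet_lt measurable_const measurable_snd

lemma measurableSet_regA : MeasurableSet regA := by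
  have h : regA = {p : ℝ × ℝ | 1 < p.1} ∩ ({p : ℝ × ℝ | 0 < p.2} ∩ {p : ℝ × ℝ | p.2 < p.1⁻¹}) := by
    ext p; simp [regA, and_assoc]
  rw [h]
  exact (measurableSet_lt measurable_const measurable_fst).inter
    ((measurableSet_lt measurable_const measurable_snd).inter
      (measurableSet_lt measurable_snd measurable_fst.inv))

/-- Integrand representing `mu` on the set `S`. -/
def FF (S : Set (ℝ × ℝ)) (p : ℝ × ℝ) : ENNReal :=
  (S ∩ UU).indicator gdens p + (S ∩ regA).indicator (fun _ => 1) p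

lemma measurable_FF {S : Set (ℝ × ℝ)} (hS : MeasurableSet S) : Measurable (FF S) :=
  (measurable_gdens.indicator (hS.inter measurableSet_UU)).add
    (measurable_const.indicator (hS.inter measurableSet_regA))

lemma m1_eq {S : Set (ℝ × ℝ)} (hS : MeasurableSet S) :
    m1 S = ∫⁻ p, (S ∩ UU).indicator gdens p := by
  rw [m1, withDensity_apply _ hS, Measure.restrict_restrict hS,
    lintegral_indicator (hS.inter measurableSet_UU)]
  rfl

lemma mu_apply {S : Set (ℝ × ℝ)} (hS : MeasurableSet S) :
    mu S = ∫⁻ p, FF S p := by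
  have h2 : m2 S = ∫⁻ p, (S ∩ regA).indicator (fun _ => (1 : ENNReal)) p := by
    rw [m2, Measure.restrict_apply hS,
      lintegral_indicator_const (hS.inter measurableSet_regA), one_mul]
  rw [mu, Measure.add_apply, m1_eq hS, h2,
    ← lintegral_add_left (measurable_gdens.indicator (hS.inter measurableSet_UU))]
  rfl

/-- The translation comparison: the disc of center `(x,1)` and squared radius `1 - y²`
has `mu`-measure at most that of `eBall (R,1) 1`. -/
lemma mu_shift_le {R x y : ℝ} (hR : 2 ≤ R) (hx1 : R < x) (hx2 : x < R + 1)
    (hy0 : 0 < y) :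
    mu {p : ℝ × ℝ | (p.1 - x) ^ 2 + (p.2 - 1) ^ 2 < 1 - y ^ 2} ≤ mu (eBall (R, 1) 1) := by
  have hc0 : (0 : ℝ) ≤ x - R := by linarith
  set D : Set (ℝ × ℝ) := {p : ℝ × ℝ | (p.1 - x) ^ 2 + (p.2 - 1) ^ 2 < 1 - y ^ 2} with hDdef
  have hDmeas : MeasurableSet D := by
    have : IsOpen D := by
      have h : D = (fun p : ℝ × ℝ => (p.1 - x) ^ 2 + (p.2 - 1) ^ 2) ⁻¹' Iio (1 - y ^ 2) := rfl
      rw [h]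
      exact (by fun_prop :
        Continuous fun p : ℝ × ℝ => (p.1 - x) ^ 2 + (p.2 - 1) ^ 2).isOpen_preimage _ isOpen_Iio
    exact this.measurableSet
  have hEmeas : MeasurableSet (eBall (R, 1) 1) := measurableSet_eBall _ _
  rw [mu_apply hDmeas, mu_apply hEmeas]
  have key : ∫⁻ p, FF D p = ∫⁻ p, FF D (p + ((x - R, 0) : ℝ × ℝ)) :=
    ((measurePreserving_add_right volume ((x - R, 0) : ℝ × ℝ)).lintegral_comp
      (measurable_FF hDmeas)).symm
  rw [key]
  apply lintegral_mono
  intro p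
  show FF D (p + ((x - R, 0) : ℝ × ℝ)) ≤ FF (eBall (R, 1) 1) p
  have hq : p + ((x - R, 0) : ℝ × ℝ) = (p.1 + (x - R), p.2) := by
    ext <;> simp
  rw [hq]
  have hy2 : 0 < y ^ 2 := by positivity
  have hmemE : (p.1 + (x - R), p.2) ∈ D → p ∈ eBall (R, 1) 1 := by
    intro hD
    have hD' : (p.1 + (x - R) - x) ^ 2 + (p.2 - 1) ^ 2 < 1 - y ^ 2 := hD
    have e1 : p.1 + (x - R) - x = p.1 - R := by ring
    rw [e1] at hD'
    show (p.1 - R) ^ 2 + (p.2 - 1) ^ 2 < 1 ^ 2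
    nlinarith
  have hp1big : (p.1 + (x - R), p.2) ∈ D → R - 1 < p.1 := by
    intro hD
    have hD' : (p.1 + (x - R) - x) ^ 2 + (p.2 - 1) ^ 2 < 1 - y ^ 2 := hD
    have e1 : p.1 + (x - R) - x = p.1 - R := by ring
    rw [e1] at hD'
    nlinarith [sq_nonneg (p.2 - 1), sq_nonneg (p.1 - R + 1)]
  apply add_le_add
  · by_cases h : (p.1 + (x - R), p.2) ∈ D ∩ UU
    · have hpE : p ∈ eBall (R, 1) 1 ∩ UU := ⟨hmemE h.1, h.2⟩
      rw [Set.indicator_of_mem h, Set.indicator_of_mem hpE]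
      have hp1 : R - 1 < p.1 := hp1big h.1
      have hp1pos : 0 < p.1 := by linarith
      apply ENNReal.ofReal_le_ofReal
      apply mul_le_mul_of_nonneg_left _ (by positivity)
      apply Real.exp_le_exp.mpr
      have h2 : p.1 ^ 2 ≤ (p.1 + (x - R)) ^ 2 := by nlinarith
      show -(((p.1 + (x - R), p.2) : ℝ × ℝ).1 ^ 2 + ((p.1 + (x - R), p.2) : ℝ × ℝ).2 ^ 2) / 2 ≤
        -(p.1 ^ 2 + p.2 ^ 2) / 2
      have e2 : ((p.1 + (x - R), p.2) : ℝ × ℝ).1 = p.1 + (x - R) := rfl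
      have e3 : ((p.1 + (x - R), p.2) : ℝ × ℝ).2 = p.2 := rfl
      rw [e2, e3]
      linarith
    · rw [Set.indicator_of_notMem h]
      exact zero_le
  · by_cases h : (p.1 + (x - R), p.2) ∈ D ∩ regA
    · have hp1 : R - 1 < p.1 := hp1big h.1
      have hp1pos : 0 < p.1 := by linarith
      obtain ⟨hA1, hA2, hA3⟩ := h.2
      have hpA : p ∈ regA := by
        refine ⟨by linarith, hA2, ?_⟩
        calc p.2 < (p.1 + (x - R))⁻¹ := hA3
        _ ≤ p.1⁻¹ := by
            apply inv_anti₀ hp1pos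
            linarith
      have hpE : p ∈ eBall (R, 1) 1 ∩ regA := ⟨hmemE h.1, hpA⟩
      rw [Set.indicator_of_mem h, Set.indicator_of_mem hpE]
    · rw [Set.indicator_of_notMem h]
      exact zero_le

/-- A good hyperbolic ball around `(x, y)`. -/
lemma exists_good_ball {R x y : ℝ} (hR : 2 ≤ R) (hx1 : R < x) (hx2 : x < R + 1)
    (hy0 : 0 < y) (hy1 : y < 1 / 2) :
    ∃ s : ℝ, 0 < s ∧ ((R + 1 / 2 : ℝ), (1 : ℝ)) ∈ hBall (x, y) s ∧
      hBall (x, y) s ⊆ {p : ℝ × ℝ | (p.1 - x) ^ 2 + (p.2 - 1) ^ 2 < 1 - y ^ 2} := by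
  have hyy : (0 : ℝ) < 1 / y ^ 2 - 1 := by
    rw [lt_sub_iff_add_lt, zero_add, lt_div_iff₀ (by positivity)]
    nlinarith
  refine ⟨Real.arsinh (Real.sqrt (1 / y ^ 2 - 1)),
    Real.arsinh_pos_iff.mpr (Real.sqrt_pos.mpr hyy), ?_, ?_⟩
  all_goals
    have hcosh : Real.cosh (Real.arsinh (Real.sqrt (1 / y ^ 2 - 1))) = 1 / y := by
      rw [Real.cosh_arsinh, Real.sq_sqrt hyy.le,
        show 1 + (1 / y ^ 2 - 1) = (1 / y) ^ 2 by ring, Real.sqrt_sq (by positivity)]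
  · refine ⟨by norm_num, ?_⟩
    rw [hcosh]
    show 1 + ((R + 1 / 2 - x) ^ 2 + (1 - y) ^ 2) / (2 * 1 * y) < 1 / y
    have h14 : (R + 1 / 2 - x) ^ 2 < 1 / 4 := by nlinarith
    have key : (R + 1 / 2 - x) ^ 2 + (1 - y) ^ 2 < 2 - 2 * y := by nlinarith
    have h2 : ((R + 1 / 2 - x) ^ 2 + (1 - y) ^ 2) / (2 * 1 * y) < 1 / y - 1 := by
      rw [div_lt_iff₀ (by positivity)]
      have heq : (1 / y - 1) * (2 * 1 * y) = 2 - 2 * y := by field_simp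
      rw [heq]; exact key
    linarith
  · intro p hp
    obtain ⟨hp2, hplt0⟩ := hp
    rw [hcosh] at hplt0
    have hplt : 1 + ((p.1 - x) ^ 2 + (p.2 - y) ^ 2) / (2 * p.2 * y) < 1 / y := hplt0
    have h2py : (0 : ℝ) < 2 * p.2 * y := by positivity
    have hN : ((p.1 - x) ^ 2 + (p.2 - y) ^ 2) / (2 * p.2 * y) < 1 / y - 1 := by linarith
    rw [div_lt_iff₀ h2py] at hN
    have heq : (1 / y - 1) * (2 * p.2 * y) = 2 * p.2 - 2 * p.2 * y := by
      field_simp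
    rw [heq] at hN
    show (p.1 - x) ^ 2 + (p.2 - 1) ^ 2 < 1 - y ^ 2
    nlinarith

/-- Upper bound for the Lebesgue part. -/
lemma m2_bound {R : ℝ} (hR : (2 : ℝ) ≤ R) :
    m2 (eBall (R, 1) 1) ≤
      ENNReal.ofReal (2 * Real.sqrt (2 / (R - 1)) * (1 / (R - 1))) := by
  have ht0 : (0 : ℝ) < R - 1 := by linarith
  have hEmeas : MeasurableSet (eBall (R, 1) 1) := measurableSet_eBall _ _
  have ha0 : (0 : ℝ) ≤ Real.sqrt (2 / (R - 1)) := Real.sqrt_nonneg _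
  have ha2 : Real.sqrt (2 / (R - 1)) ^ 2 = 2 / (R - 1) := Real.sq_sqrt (by positivity)
  set a : ℝ := Real.sqrt (2 / (R - 1))
  have hsub2 : eBall (R, 1) 1 ∩ regA ⊆ Ioo (R - a) (R + a) ×ˢ Ioo (0 : ℝ) (1 / (R - 1)) := by
    rintro p ⟨hpE, hp1, hp2, hp3⟩
    have hball : (p.1 - R) ^ 2 + (p.2 - 1) ^ 2 < 1 ^ 2 := hpE
    have hpR : R - 1 < p.1 := by nlinarith [sq_nonneg (p.2 - 1), sq_nonneg (p.1 - R + 1)]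
    have hp1pos : (0 : ℝ) < p.1 := by linarith
    have hpt : p.2 < 1 / (R - 1) := by
      have h1 : p.1⁻¹ ≤ (R - 1)⁻¹ := by
        apply inv_anti₀ ht0; linarith
      have h2 : p.2 < p.1⁻¹ := hp3
      rw [one_div]; linarith
    have hsq : (p.1 - R) ^ 2 < a ^ 2 := by
      rw [ha2]
      have h2p : (p.1 - R) ^ 2 < 2 * p.2 := by nlinarith [sq_nonneg p.2]
      have h3 : 2 * p.2 < 2 * (1 / (R - 1)) := by linarith
      have h4 : 2 * (1 / (R - 1)) = 2 / (R - 1) := by ring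
      linarith
    refine ⟨⟨?_, ?_⟩, hp2, hpt⟩
    · nlinarith [sq_nonneg (p.1 - R + a)]
    · nlinarith [sq_nonneg (p.1 - R - a)]
  calc m2 (eBall (R, 1) 1) = volume (eBall (R, 1) 1 ∩ regA) := by
        rw [m2, Measure.restrict_apply hEmeas]
  _ ≤ volume (Ioo (R - a) (R + a) ×ˢ Ioo (0 : ℝ) (1 / (R - 1))) := measure_mono hsub2
  _ = ENNReal.ofReal (2 * a) * ENNReal.ofReal (1 / (R - 1)) := by
        rw [Measure.volume_eq_prod, Measure.prod_prod, Real.volume_Ioo, Real.volume_Ioo]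
        congr 2 <;> ring
  _ = ENNReal.ofReal (2 * a * (1 / (R - 1))) := by
        rw [← ENNReal.ofReal_mul (by positivity)]

/-- Upper bound for the gaussian part. -/
lemma m1_bound {R : ℝ} (hR : (2 : ℝ) ≤ R) :
    m1 (eBall (R, 1) 1) ≤ ENNReal.ofReal (Real.exp (-((R - 1) ^ 2) / 2)) := by
  have hEmeas : MeasurableSet (eBall (R, 1) 1) := measurableSet_eBall _ _
  rw [m1_eq hEmeas]
  set C : ENNReal := ENNReal.ofReal ((2 * π)⁻¹ * Real.exp (-((R - 1) ^ 2) / 2)) with hCdef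
  have hbd : ∀ p, (eBall (R, 1) 1 ∩ UU).indicator gdens p ≤
      (eBall (R, 1) 1 ∩ UU).indicator (fun _ => C) p := by
    intro p
    by_cases h : p ∈ eBall (R, 1) 1 ∩ UU
    · rw [Set.indicator_of_mem h, Set.indicator_of_mem h]
      obtain ⟨hpE, hpU⟩ := h
      have hball : (p.1 - R) ^ 2 + (p.2 - 1) ^ 2 < 1 ^ 2 := hpE
      have hpR : R - 1 < p.1 := by nlinarith [sq_nonneg (p.2 - 1), sq_nonneg (p.1 - R + 1)]
      apply ENNReal.ofReal_le_ofReal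
      apply mul_le_mul_of_nonneg_left _ (by positivity)
      apply Real.exp_le_exp.mpr
      have h2 : (R - 1) ^ 2 ≤ p.1 ^ 2 := by nlinarith
      have h3 : (0 : ℝ) ≤ p.2 ^ 2 := sq_nonneg _
      linarith
    · rw [Set.indicator_of_notMem h, Set.indicator_of_notMem h]
  calc ∫⁻ p, (eBall (R, 1) 1 ∩ UU).indicator gdens p
      ≤ ∫⁻ p, (eBall (R, 1) 1 ∩ UU).indicator (fun _ => C) p := lintegral_mono hbd
  _ = C * volume (eBall (R, 1) 1 ∩ UU) :=
        lintegral_indicator_const (hEmeas.inter measurableSet_UU) C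
  _ ≤ C * volume (Ioo (R - 1) (R + 1) ×ˢ Ioo (0 : ℝ) 2) := by
        apply mul_le_mul_right
        apply measure_mono
        rintro p ⟨hpE, hpU⟩
        have hball : (p.1 - R) ^ 2 + (p.2 - 1) ^ 2 < 1 ^ 2 := hpE
        refine ⟨⟨?_, ?_⟩, hpU, ?_⟩
        · nlinarith [sq_nonneg (p.2 - 1), sq_nonneg (p.1 - R + 1)]
        · nlinarith [sq_nonneg (p.2 - 1), sq_nonneg (p.1 - R - 1)]
        · nlinarith [sq_nonneg (p.1 - R), sq_nonneg (p.2 - 2)]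
  _ = C * ENNReal.ofReal 4 := by
        rw [Measure.volume_eq_prod, Measure.prod_prod, Real.volume_Ioo, Real.volume_Ioo,
          ← ENNReal.ofReal_mul (by norm_num)]
        norm_num
  _ = ENNReal.ofReal ((2 * π)⁻¹ * Real.exp (-((R - 1) ^ 2) / 2) * 4) := by
        rw [hCdef, ← ENNReal.ofReal_mul (by positivity)]
  _ ≤ ENNReal.ofReal (Real.exp (-((R - 1) ^ 2) / 2)) := by
        apply ENNReal.ofReal_le_ofReal
        have hpi : (2 * π)⁻¹ ≤ 4⁻¹ := by
          apply inv_anti₀ (by norm_num)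
          nlinarith [Real.pi_gt_three]
        nlinarith [Real.exp_pos (-((R - 1) ^ 2) / 2), hpi]

/-- The measure of the euclidean ball is small. -/
lemma mu_ball_small {R : ℝ} (hR : (400 : ℝ) ≤ R) :
    mu (eBall (R, 1) 1) < ENNReal.ofReal (3 / Real.sqrt (R - 1) ^ 3) := by
  have ht0 : (0 : ℝ) < R - 1 := by linarith
  have hu0 : 0 < Real.sqrt (R - 1) := Real.sqrt_pos.mpr ht0
  have hu19 : (19 : ℝ) ≤ Real.sqrt (R - 1) := by
    have h := Real.sqrt_le_sqrt (by linarith : (361 : ℝ) ≤ R - 1)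
    rwa [show (361 : ℝ) = 19 ^ 2 by norm_num, Real.sqrt_sq (by norm_num)] at h
  set u : ℝ := Real.sqrt (R - 1)
  have htu : R - 1 = u ^ 2 := (Real.sq_sqrt ht0.le).symm
  have hmuE : mu (eBall (R, 1) 1) ≤
      ENNReal.ofReal (Real.exp (-((R - 1) ^ 2) / 2) + 2 * Real.sqrt (2 / (R - 1)) * (1 / (R - 1))) := by
    rw [mu, Measure.add_apply, ENNReal.ofReal_add (by positivity) (by positivity)]
    exact add_le_add (m1_bound (by linarith)) (m2_bound (by linarith))
  refine lt_of_le_of_lt hmuE ((ENNReal.ofReal_lt_ofReal_iff (by positivity)).mpr ?_)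
  have hsqrt2 : Real.sqrt 2 < 1.415 := by
    nlinarith [Real.sq_sqrt (by norm_num : (0:ℝ) ≤ 2), Real.sqrt_nonneg 2]
  have hs2 : (0 : ℝ) ≤ Real.sqrt 2 := Real.sqrt_nonneg 2
  have he : Real.sqrt (2 / (R - 1)) = Real.sqrt 2 / u := by
    rw [Real.sqrt_div (by norm_num : (0:ℝ) ≤ 2)]
  rw [he]
  have e2 : 2 * (Real.sqrt 2 / u) * (1 / (R - 1)) = 2 * Real.sqrt 2 / u ^ 3 := by
    rw [htu]; field_simp
  rw [e2]
  have hexp : Real.exp (-((R - 1) ^ 2) / 2) ≤ 2 / u ^ 4 := by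
    have h1 : (R - 1) ^ 2 / 2 + 1 ≤ Real.exp ((R - 1) ^ 2 / 2) := Real.add_one_le_exp _
    have h2 : Real.exp (-((R - 1) ^ 2) / 2) = (Real.exp ((R - 1) ^ 2 / 2))⁻¹ := by
      rw [← Real.exp_neg]; ring_nf
    have h3 : (0 : ℝ) < (R - 1) ^ 2 / 2 := by positivity
    have h4 : (Real.exp ((R - 1) ^ 2 / 2))⁻¹ ≤ ((R - 1) ^ 2 / 2)⁻¹ := by
      apply inv_anti₀ h3; linarith
    have h5 : ((R - 1) ^ 2 / 2)⁻¹ = 2 / (R - 1) ^ 2 := by rw [inv_div]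
    have h6 : (R - 1) ^ 2 = u ^ 4 := by rw [htu]; ring
    rw [h2]
    calc (Real.exp ((R - 1) ^ 2 / 2))⁻¹ ≤ ((R - 1) ^ 2 / 2)⁻¹ := h4
    _ = 2 / (R - 1) ^ 2 := h5
    _ = 2 / u ^ 4 := by rw [h6]
  have hkey : 2 / u ^ 4 + 2 * Real.sqrt 2 / u ^ 3 < 3 / u ^ 3 := by
    rw [div_add_div _ _ (by positivity) (by positivity),
      div_lt_div_iff₀ (by positivity) (by positivity)]
    have hA : 19 * u ^ 6 ≤ u ^ 7 := by
      have : u ^ 7 = u * u ^ 6 := by ring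
      rw [this]
      exact mul_le_mul_of_nonneg_right hu19 (by positivity)
    have hB : 2 * Real.sqrt 2 * u ^ 7 ≤ 2.83 * u ^ 7 := by
      apply mul_le_mul_of_nonneg_right _ (by positivity)
      linarith
    nlinarith [pow_pos hu0 7]
  linarith

set_option maxHeartbeats 1000000 in
theorem stmt18 :
    ∃ R₀ : ℝ, ∀ R : ℝ, R₀ ≤ R → ∀ x y : ℝ, R < x → x < R + 1 → 0 < y → y < 1 / x →
      (mu (eBall (R, 1) 1))⁻¹ ≤
          Mmax mu (Measure.dirac ((R + 1 / 2 : ℝ), (1 : ℝ))) (x, y) ∧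
      ENNReal.ofReal ((R - 1) ^ ((3 : ℝ) / 2) / 3) < (mu (eBall (R, 1) 1))⁻¹ := by
  refine ⟨400, fun R hR x y hx1 hx2 hy0 hyx => ?_⟩
  have hR2 : (2 : ℝ) ≤ R := by linarith
  have hx0 : (2 : ℝ) < x := by linarith
  have hyx' : y * x < 1 := (lt_div_iff₀ (by linarith)).mp hyx
  have hy1 : y < 1 / 2 := by nlinarith
  constructor
  · -- part 1
    obtain ⟨s, hs, hmem, hsub⟩ := exists_good_ball hR2 hx1 hx2 hy0 hy1
    have hDE : mu {p : ℝ × ℝ | (p.1 - x) ^ 2 + (p.2 - 1) ^ 2 < 1 - y ^ 2} ≤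
        mu (eBall (R, 1) 1) := mu_shift_le hR2 hx1 hx2 hy0
    have hBE : mu (hBall (x, y) s) ≤ mu (eBall (R, 1) 1) :=
      le_trans (measure_mono hsub) hDE
    have h1 : (mu (eBall (R, 1) 1))⁻¹ ≤
        Measure.dirac ((R + 1 / 2 : ℝ), (1 : ℝ)) (hBall (x, y) s) / mu (hBall (x, y) s) := by
      rw [Measure.dirac_apply_of_mem hmem, one_div]
      exact ENNReal.inv_le_inv.mpr hBE
    refine h1.trans ?_
    exact le_iSup₂ (f := fun (s : ℝ) (_ : 0 < s) =>
      Measure.dirac ((R + 1 / 2 : ℝ), (1 : ℝ)) (hBall (x, y) s) / mu (hBall (x, y) s)) s hs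
  · -- part 2
    have ht0 : (0 : ℝ) < R - 1 := by linarith
    have hu0 : 0 < Real.sqrt (R - 1) := Real.sqrt_pos.mpr ht0
    have hrpow : (R - 1) ^ ((3 : ℝ) / 2) = Real.sqrt (R - 1) ^ 3 := by
      rw [show ((3 : ℝ) / 2) = (1 / 2) * ((3 : ℕ) : ℝ) by push_cast; ring,
        Real.rpow_mul ht0.le, Real.rpow_natCast, ← Real.sqrt_eq_rpow]
    rw [hrpow]
    calc ENNReal.ofReal (Real.sqrt (R - 1) ^ 3 / 3)
        = (ENNReal.ofReal (3 / Real.sqrt (R - 1) ^ 3))⁻¹ := by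
          rw [← ENNReal.ofReal_inv_of_pos (by positivity), inv_div]
    _ < (mu (eBall (R, 1) 1))⁻¹ := ENNReal.inv_lt_inv.mpr (mu_ball_small hR)
end
end
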